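/- Entropy-integral (Dudley chaining) bound on the empirical Rademacher average: for any class F of measurable functions from Z to [0,1] and any S = {z_1,…,z_n} ∈ Zⁿ, R̂_n(F,S) ≤ inf_{α≥0} { 4α + (12/√n) ∫_α^1 √(log N₂(F,ρ,S)) dρ }. -/

import Mathlib

/-!
Chaining. Scaling the sample by `1/√n` turns `d_S` into the Euclidean distance, so that
`R̂_n(F,S) = n^{-1/2} 𝔼_σ sup_{v ∈ V} ⟪σ, v⟫` for a set `V ⊆ [0, n^{-1/2}]ⁿ` of diameter
at most `1`. Let `π_j v` be a nearest point of a minimal `2^{-j}`-net of `V` (a single point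
for `j = 0`) and telescope `⟪σ, v⟫` along `π_0 v, …, π_K v, v`. The last link costs at most
`√n 2^{-K}` by Cauchy–Schwarz. The `j`-th link ranges over at most `N(2^{-j-1})²` vectors of
norm at most `3·2^{-j-1}`, so Massart's lemma (Jensen plus the sub-Gaussian moment generating
function of Rademacher sums) bounds its expected supremum by `6·2^{-j-1} √(log N(2^{-j-1}))`.
As `ρ ↦ √(log N(ρ))` is antitone, the dyadic sum is at most twice the entropy integral from
`2^{-K-1}`; choosing `2^{-K-2} < α ≤ 2^{-K-1}` gives the bound. For `α = 0` let `K → ∞`: the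
integral is finite because a grid gives `N(ρ) ≤ (C/ρ)ⁿ`.
-/

open MeasureTheory Real

namespace RST

variable {Z : Type*}

/-- The empirical `ℓ₂` pseudo-distance on a sample `S = (z_1,…,z_n)`. -/
noncomputable def empDistZ {n : ℕ} (S : Fin n → Z) (f g : Z → ℝ) : ℝ :=
  Real.sqrt ((n : ℝ)⁻¹ * ∑ i, (f (S i) - g (S i)) ^ 2)

/-- The empirical covering number `N₂(F, ρ, S)` (with respect to `d_S`). -/
noncomputable def coveringNumberZ {n : ℕ} (F : Set (Z → ℝ)) (ρ : ℝ) (S : Fin n → Z) : ℕ :=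
  sInf {N : ℕ | ∃ c : Fin N → Z → ℝ, (∀ i, c i ∈ F) ∧ ∀ f ∈ F, ∃ i, empDistZ S f (c i) ≤ ρ}

/-- The empirical Rademacher average `R̂_n(F, S)`. -/
noncomputable def empRadZ {n : ℕ} (F : Set (Z → ℝ)) (S : Fin n → Z) : ℝ :=
  ((2 : ℝ) ^ n)⁻¹ * ∑ σ : Fin n → Bool,
    sSup ((fun f => (n : ℝ)⁻¹ * ∑ i, (if σ i then (1 : ℝ) else -1) * f (S i)) '' F)

universe u

open Finset Metric
open scoped BigOperators NNReal ENNReal InnerProductSpace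

lemma _root_.ConvexOn.map_expect_le {α : Type*} {s : Set ℝ} {φ : ℝ → ℝ}
    (hφ : ConvexOn ℝ s φ) {t : Finset α} (ht : t.Nonempty) {f : α → ℝ}
    (hf : ∀ a ∈ t, f a ∈ s) :
    φ (𝔼 a ∈ t, f a) ≤ 𝔼 a ∈ t, φ (f a) := by
  have hexp (g : α → ℝ) : 𝔼 a ∈ t, g a = ∑ a ∈ t, (#t : ℝ)⁻¹ • g a := by
    rw [expect_eq_sum_div_card, ← smul_sum, smul_eq_mul, inv_mul_eq_div]
  rw [hexp, hexp]
  refine hφ.map_sum_le (fun _ _ => by positivity) ?_ hf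
  rw [sum_const, nsmul_eq_mul, mul_inv_cancel₀ (by exact_mod_cast ht.card_pos.ne')]

lemma le_mul_sqrt_of_forall_le_div_add {E L b : ℝ} (hb : 0 ≤ b)
    (h : ∀ t > 0, E ≤ L / t + t * b ^ 2 / 2) : E ≤ b * √(2 * L) := by
  by_contra! hE
  have hE0 : 0 < E := (by positivity : 0 ≤ b * √(2 * L)).trans_lt hE
  rcases hb.eq_or_lt with rfl | hb
  · have := h ((|L| + 1) / E) (div_pos (by positivity) hE0)
    rw [div_div_eq_mul_div, zero_pow two_ne_zero, mul_zero, zero_div, add_zero,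
      le_div_iff₀ (by positivity)] at this
    nlinarith [le_abs_self L]
  have hlam := h (E / b ^ 2) (div_pos hE0 (by positivity))
  rw [div_div_eq_mul_div, div_mul_cancel₀ _ (by positivity)] at hlam
  have h2L : 0 ≤ 2 * L := by
    by_contra! hL
    have : L * b ^ 2 / E < 0 :=
      div_neg_of_neg_of_pos (mul_neg_of_neg_of_pos (by linarith) (by positivity)) hE0
    linarith
  have hsq : (b * √(2 * L)) ^ 2 = 2 * L * b ^ 2 := by
    rw [mul_pow, sq_sqrt h2L]; ring
  have : L * b ^ 2 / E < E / 2 := by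
    rw [div_lt_iff₀ hE0]; nlinarith [(by positivity : 0 ≤ b * √(2 * L))]
  linarith

lemma log_natCast_mono : Monotone fun n : ℕ => log n := by
  intro m n hmn
  rcases m.eq_zero_or_pos with rfl | hm
  · simpa using log_natCast_nonneg n
  · exact log_le_log (by positivity) (by exact_mod_cast hmn)

lemma sqrt_two_mul_log_le {a m : ℕ} (ha : 0 < a) (h : a ≤ m ^ 2) :
    √(2 * log a) ≤ 2 * √(log m) := by
  have hm : 0 < m := pos_of_ne_zero fun hm => by simp [hm] at h; omega
  have hlog : log a ≤ 2 * log m := by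
    calc log a ≤ log ((m : ℝ) ^ 2) := log_le_log (by positivity) (by exact_mod_cast h)
      _ = 2 * log m := by simp [log_pow]
  calc √(2 * log a) ≤ √(2 ^ 2 * log m) := sqrt_le_sqrt (by linarith)
    _ = 2 * √(log m) := by rw [sqrt_mul (by positivity), sqrt_sq zero_le_two]

section Rademacher

variable {ι : Type*} [Fintype ι]

noncomputable def signVec (σ : ι → Bool) : EuclideanSpace ℝ ι :=
  WithLp.toLp 2 fun i => if σ i then 1 else -1

lemma inner_signVec (σ : ι → Bool) (v : EuclideanSpace ℝ ι) :
    ⟪signVec σ, v⟫_ℝ = ∑ i, (if σ i then 1 else -1) * v i := by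
  simp [signVec, PiLp.inner_apply, mul_comm]

lemma norm_signVec (σ : ι → Bool) : ‖signVec σ‖ = √(Fintype.card ι) := by
  simp [EuclideanSpace.norm_eq, signVec, apply_ite]

lemma expect_inner_signVec [DecidableEq ι] (v : EuclideanSpace ℝ ι) :
    𝔼 σ, ⟪signVec σ, v⟫_ℝ = 0 := by
  have hnot : Function.Involutive fun (σ : ι → Bool) i => !σ i := fun σ => by simp
  have hflip (σ : ι → Bool) : signVec (fun i => !σ i) = -signVec σ := by
    ext i; cases h : σ i <;> simp [signVec, h]
  have h := Fintype.expect_bijective _ hnot.bijective (fun σ => ⟪signVec σ, v⟫_ℝ)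
    (fun σ => -⟪signVec σ, v⟫_ℝ) fun σ => by
      simp only [← inner_neg_left, ← hflip, Bool.not_not]
  rw [expect_neg_distrib] at h
  linarith

lemma expect_prod_eq_prod_expect [DecidableEq ι] (f : ι → Bool → ℝ) :
    𝔼 σ : ι → Bool, ∏ i, f i (σ i) = ∏ i, 𝔼 b, f i b := by
  simp only [Fintype.expect_eq_sum_div_card, ← Fintype.prod_sum, Fintype.card_pi,
    Nat.cast_prod, prod_div_distrib]

lemma expect_exp_inner_signVec_le [DecidableEq ι] (v : EuclideanSpace ℝ ι) :
    𝔼 σ, exp ⟪signVec σ, v⟫_ℝ ≤ exp (‖v‖ ^ 2 / 2) :=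
  calc 𝔼 σ, exp ⟪signVec σ, v⟫_ℝ = ∏ i, cosh (v i) := by
        simp_rw [inner_signVec, exp_sum]
        rw [expect_prod_eq_prod_expect (fun i b => exp ((if b then 1 else -1) * v i))]
        refine prod_congr rfl fun i _ => ?_
        rw [Fintype.expect_eq_sum_div_card]
        simp [cosh_eq]
    _ ≤ ∏ i, exp (v i ^ 2 / 2) :=
        prod_le_prod (fun i _ => (cosh_pos _).le) fun i _ => cosh_le_exp_half_sq _
    _ = exp (‖v‖ ^ 2 / 2) := by
        rw [← exp_sum, ← sum_div, EuclideanSpace.real_norm_sq_eq]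

/-- Massart's finite class lemma. -/
theorem expect_sup'_inner_signVec_le [DecidableEq ι] (A : Finset (EuclideanSpace ℝ ι))
    (hA : A.Nonempty) {b : ℝ} (hb : ∀ a ∈ A, ‖a‖ ≤ b) :
    𝔼 σ, A.sup' hA (fun a => ⟪signVec σ, a⟫_ℝ) ≤ b * √(2 * log #A) := by
  refine le_mul_sqrt_of_forall_le_div_add ((norm_nonneg _).trans (hb _ hA.choose_spec))
    fun t ht => ?_
  have hmgf : exp (t * 𝔼 σ, A.sup' hA (fun a => ⟪signVec σ, a⟫_ℝ)) ≤
      #A * exp (t ^ 2 * b ^ 2 / 2) :=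
    calc exp (t * 𝔼 σ, A.sup' hA (fun a => ⟪signVec σ, a⟫_ℝ))
        ≤ 𝔼 σ, exp (t * A.sup' hA (fun a => ⟪signVec σ, a⟫_ℝ)) := by
          rw [mul_expect]
          exact convexOn_exp.map_expect_le univ_nonempty fun _ _ => Set.mem_univ _
      _ ≤ 𝔼 σ, ∑ a ∈ A, exp ⟪signVec σ, t • a⟫_ℝ := by
          refine expect_le_expect fun σ _ => ?_
          obtain ⟨a, ha, hmax⟩ := A.exists_mem_eq_sup' hA fun a => ⟪signVec σ, a⟫_ℝ
          rw [hmax, ← inner_smul_right]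
          exact single_le_sum (f := fun a => exp ⟪signVec σ, t • a⟫_ℝ)
            (fun a _ => (exp_pos _).le) ha
      _ = ∑ a ∈ A, 𝔼 σ, exp ⟪signVec σ, t • a⟫_ℝ := expect_sum_comm _ _ _
      _ ≤ ∑ _a ∈ A, exp (t ^ 2 * b ^ 2 / 2) := by
          refine sum_le_sum fun a ha => (expect_exp_inner_signVec_le _).trans ?_
          rw [norm_smul, Real.norm_of_nonneg ht.le, mul_pow]
          gcongr
          exact hb a ha
      _ = #A * exp (t ^ 2 * b ^ 2 / 2) := by rw [sum_const, nsmul_eq_mul]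
  have hlog := log_le_log (exp_pos _) hmgf
  rw [log_exp, log_mul (by exact_mod_cast hA.card_pos.ne') (exp_pos _).ne', log_exp] at hlog
  rw [div_add' _ _ _ ht.ne', le_div_iff₀ ht]
  linarith

end Rademacher

section CoveringNumber

variable {X : Type*} [PseudoMetricSpace X] {V : Set X}

/-- `ENat.toNat` sends an infinite covering number to `0`, as `sInf ∅ = 0` does in
`coveringNumberZ`. -/
noncomputable def dudleyIntegrand (V : Set X) (ρ : ℝ) : ℝ :=
  √(log (coveringNumber ρ.toNNReal V).toNat)

lemma dudleyIntegrand_nonneg (V : Set X) (ρ : ℝ) : 0 ≤ dudleyIntegrand V ρ := sqrt_nonneg _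

lemma isCover_toNNReal_iff {ρ : ℝ} (hρ : 0 ≤ ρ) {C : Set X} :
    IsCover ρ.toNNReal V C ↔ ∀ v ∈ V, ∃ c ∈ C, dist v c ≤ ρ := by
  simp only [IsCover, SetRel.IsCover, Set.mem_ofPred_eq, ENNReal.ofNNReal_toNNReal,
    edist_le_ofReal hρ]

lemma coveringNumber_ne_top (hV : TotallyBounded V) {ε : ℝ≥0} (hε : ε ≠ 0) :
    coveringNumber ε V ≠ ⊤ := by
  obtain ⟨C, hCV, hCfin, hC⟩ := exists_finite_isCover_of_totallyBounded hε hV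
  exact ne_top_of_le_ne_top hCfin.encard_lt_top.ne (hC.coveringNumber_le_encard hCV)

lemma exists_finset_cover {ρ : ℝ} (hρ : 0 ≤ ρ)
    (hfin : coveringNumber ρ.toNNReal V ≠ ⊤) :
    ∃ C : Finset X, ↑C ⊆ V ∧ #C = (coveringNumber ρ.toNNReal V).toNat ∧
      ∀ v ∈ V, ∃ c ∈ C, dist v c ≤ ρ := by
  have hC := finite_minimalCover (ε := ρ.toNNReal) (A := V)
  refine ⟨hC.toFinset, by simpa using minimalCover_subset, ?_, ?_⟩
  · rw [← encard_minimalCover hfin, hC.encard_eq_coe_toFinset_card,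
      ENat.toNat_natCast]
  · simpa using (isCover_toNNReal_iff hρ).1 (isCover_minimalCover hfin)

lemma totallyBounded_of_ediam_ne_top [ProperSpace X] (hV : ediam V ≠ ⊤) : TotallyBounded V :=
  (isBounded_iff_ediam_ne_top.2 hV).isCompact_closure.totallyBounded.subset subset_closure

lemma antitoneOn_dudleyIntegrand (hV : TotallyBounded V) :
    AntitoneOn (dudleyIntegrand V) (Set.Ioi 0) := by
  intro ρ hρ ρ' _ hρρ'
  refine sqrt_le_sqrt (log_natCast_mono (ENat.toNat_le_toNat ?_ ?_))
  · exact coveringNumber_anti (Real.toNNReal_le_toNNReal hρρ')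
  · exact coveringNumber_ne_top hV (by simpa using hρ)

lemma dudleyIntegrand_eq_zero_of_one_le (hV : ediam V ≤ 1) {ρ : ℝ} (hρ : 1 ≤ ρ) :
    dudleyIntegrand V ρ = 0 := by
  have h : coveringNumber ρ.toNNReal V ≤ 1 :=
    coveringNumber_le_one_of_ediam_le (hV.trans (by simpa using hρ))
  have h' : (coveringNumber ρ.toNNReal V).toNat ≤ 1 := by
    simpa using ENat.toNat_le_toNat h ENat.one_ne_top
  interval_cases hN : (coveringNumber ρ.toNNReal V).toNat <;> simp [dudleyIntegrand, hN]

lemma integral_dudleyIntegrand_nonneg (hV : ediam V ≤ 1) (α : ℝ) :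
    0 ≤ ∫ ρ in α..1, dudleyIntegrand V ρ := by
  rcases le_or_gt α 1 with hα | hα
  · exact intervalIntegral.integral_nonneg hα fun ρ _ => dudleyIntegrand_nonneg V ρ
  · rw [intervalIntegral.integral_symm, intervalIntegral.integral_congr (g := fun _ => 0)
      fun ρ hρ => dudleyIntegrand_eq_zero_of_one_le hV (Set.uIcc_of_le hα.le ▸ hρ).1]
    simp

end CoveringNumber

section Chaining

variable {ι : Type*} [Fintype ι]

noncomputable def rademacherWidth [DecidableEq ι] (V : Set (EuclideanSpace ℝ ι)) : ℝ :=
  𝔼 σ, sSup ((fun v => ⟪signVec σ, v⟫_ℝ) '' V)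

lemma rademacherWidth_le_of_chain [DecidableEq ι] {V : Set (EuclideanSpace ℝ ι)}
    (hne : V.Nonempty) {K : ℕ} {r : ℝ} {c₀ : EuclideanSpace ℝ ι}
    (p : ℕ → EuclideanSpace ℝ ι → EuclideanSpace ℝ ι)
    (A : ℕ → Finset (EuclideanSpace ℝ ι)) (hA : ∀ j, (A j).Nonempty)
    (hp₀ : ∀ v ∈ V, p 0 v = c₀) (hpK : ∀ v ∈ V, dist v (p K v) ≤ r)
    (hpA : ∀ j < K, ∀ v ∈ V, p (j + 1) v - p j v ∈ A j) :
    rademacherWidth V ≤ √(Fintype.card ι) * r +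
      ∑ j ∈ range K, 𝔼 σ, (A j).sup' (hA j) (fun a => ⟪signVec σ, a⟫_ℝ) := by
  have hpt (σ : ι → Bool) : sSup ((fun v => ⟪signVec σ, v⟫_ℝ) '' V) ≤
      √(Fintype.card ι) * r +
        ∑ j ∈ range K, (A j).sup' (hA j) (fun a => ⟪signVec σ, a⟫_ℝ) + ⟪signVec σ, c₀⟫_ℝ := by
    refine csSup_le (hne.image _) ?_
    rintro _ ⟨v, hv, rfl⟩
    have htele : ⟪signVec σ, v⟫_ℝ =
        ⟪signVec σ, v - p K v⟫_ℝ + ∑ j ∈ range K, ⟪signVec σ, p (j + 1) v - p j v⟫_ℝ +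
          ⟪signVec σ, p 0 v⟫_ℝ := by
      simp only [inner_sub_right, sum_range_sub (fun j => ⟪signVec σ, p j v⟫_ℝ)]
      ring
    have hfine : ⟪signVec σ, v - p K v⟫_ℝ ≤ √(Fintype.card ι) * r := by
      refine (real_inner_le_norm _ _).trans ?_
      rw [norm_signVec, ← dist_eq_norm]
      exact mul_le_mul_of_nonneg_left (hpK v hv) (sqrt_nonneg _)
    have hlinks : ∑ j ∈ range K, ⟪signVec σ, p (j + 1) v - p j v⟫_ℝ ≤
        ∑ j ∈ range K, (A j).sup' (hA j) (fun a => ⟪signVec σ, a⟫_ℝ) :=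
      sum_le_sum fun j hj => le_sup' (fun a => ⟪signVec σ, a⟫_ℝ)
        (hpA j (mem_range.1 hj) v hv)
    show ⟪signVec σ, v⟫_ℝ ≤ _
    rw [htele, hp₀ v hv]
    linarith
  calc rademacherWidth V
      ≤ 𝔼 σ, (√(Fintype.card ι) * r +
          ∑ j ∈ range K, (A j).sup' (hA j) (fun a => ⟪signVec σ, a⟫_ℝ) +
            ⟪signVec σ, c₀⟫_ℝ) :=
        expect_le_expect fun σ _ => hpt σ
    _ = _ := by
        rw [expect_add_distrib, expect_add_distrib, Fintype.expect_const, expect_sum_comm,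
          expect_inner_signVec, add_zero]

open Classical in
noncomputable def increments (C C' : Finset (EuclideanSpace ℝ ι)) (δ : ℝ) :
    Finset (EuclideanSpace ℝ ι) :=
  ((C ×ˢ C').filter fun q => ‖q.1 - q.2‖ ≤ δ).image fun q => q.1 - q.2

lemma sub_mem_increments {C C' : Finset (EuclideanSpace ℝ ι)} {δ : ℝ}
    {c c' : EuclideanSpace ℝ ι} (hc : c ∈ C) (hc' : c' ∈ C') (h : ‖c - c'‖ ≤ δ) :
    c - c' ∈ increments C C' δ :=
  mem_image.2 ⟨(c, c'), mem_filter.2 ⟨mem_product.2 ⟨hc, hc'⟩, h⟩, rfl⟩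

lemma expect_sup'_increments_le [DecidableEq ι] {C C' : Finset (EuclideanSpace ℝ ι)} {δ : ℝ}
    (hne : (increments C C' δ).Nonempty) (hcard : #C' ≤ #C) :
    𝔼 σ, (increments C C' δ).sup' hne (fun a => ⟪signVec σ, a⟫_ℝ) ≤
      2 * δ * √(log #C) := by
  have hnorm : ∀ a ∈ increments C C' δ, ‖a‖ ≤ δ := by
    simp only [increments, mem_image, mem_filter]
    rintro _ ⟨q, ⟨-, hq⟩, rfl⟩
    exact hq
  have hcard' : #(increments C C' δ) ≤ #C ^ 2 :=
    calc #(increments C C' δ) ≤ #C * #C' :=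
          card_image_le.trans ((card_filter_le _ _).trans (card_product _ _).le)
      _ ≤ #C ^ 2 := by rw [sq]; gcongr
  have hδ : 0 ≤ δ := (norm_nonneg _).trans (hnorm _ hne.choose_spec)
  calc _ ≤ δ * √(2 * log #(increments C C' δ)) := expect_sup'_inner_signVec_le _ hne hnorm
    _ ≤ δ * (2 * √(log #C)) := by gcongr; exact sqrt_two_mul_log_le hne.card_pos hcard'
    _ = 2 * δ * √(log #C) := by ring

theorem rademacherWidth_le_chaining [DecidableEq ι] {V : Set (EuclideanSpace ℝ ι)}
    (hne : V.Nonempty) (hV : ediam V ≤ 1) (K : ℕ) :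
    rademacherWidth V ≤ √(Fintype.card ι) * 2⁻¹ ^ K +
      6 * ∑ j ∈ range K, 2⁻¹ ^ (j + 1) * dudleyIntegrand V (2⁻¹ ^ (j + 1)) := by
  have hTB : TotallyBounded V :=
    totallyBounded_of_ediam_ne_top (ne_top_of_le_ne_top ENNReal.one_ne_top hV)
  choose C hCV hCcard hC using fun j : ℕ =>
    exists_finset_cover (ρ := 2⁻¹ ^ j) (by positivity) (coveringNumber_ne_top hTB (by simp))
  choose! p hpC hp using hC
  obtain ⟨c₀, hc₀⟩ : ∃ c₀, C 0 = {c₀} := card_eq_one.1 <| by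
    rw [hCcard, coveringNumber_eq_one_of_ediam_le hne (by simpa using hV)]; rfl
  have hcard (j : ℕ) : #(C j) ≤ #(C (j + 1)) := by
    rw [hCcard, hCcard]
    refine ENat.toNat_le_toNat (coveringNumber_anti (Real.toNNReal_le_toNNReal ?_))
      (coveringNumber_ne_top hTB (by simp))
    exact pow_le_pow_of_le_one (by norm_num) (by norm_num) j.le_succ
  have hpA (j : ℕ) (v) (hv : v ∈ V) :
      p (j + 1) v - p j v ∈ increments (C (j + 1)) (C j) (3 * 2⁻¹ ^ (j + 1)) := by
    refine sub_mem_increments (hpC _ _ hv) (hpC _ _ hv) ?_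
    calc ‖p (j + 1) v - p j v‖ ≤ dist v (p (j + 1) v) + dist v (p j v) := by
          rw [← dist_eq_norm]; exact dist_triangle_left _ _ _
      _ ≤ 2⁻¹ ^ (j + 1) + 2⁻¹ ^ j := add_le_add (hp _ _ hv) (hp _ _ hv)
      _ = 3 * 2⁻¹ ^ (j + 1) := by ring
  have hA (j : ℕ) := (⟨_, hpA j _ hne.some_mem⟩ : (increments _ _ _).Nonempty)
  calc rademacherWidth V
      ≤ √(Fintype.card ι) * 2⁻¹ ^ K + ∑ j ∈ range K, 𝔼 σ,
          (increments (C (j + 1)) (C j) (3 * 2⁻¹ ^ (j + 1))).sup' (hA j)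
            (fun a => ⟪signVec σ, a⟫_ℝ) :=
        rademacherWidth_le_of_chain hne p _ hA (fun v hv => by simpa [hc₀] using hpC 0 v hv)
          (hp K) fun j _ => hpA j
    _ ≤ _ := by
        rw [mul_sum]
        gcongr with j
        refine (expect_sup'_increments_le (hA j) (hcard j)).trans_eq ?_
        rw [dudleyIntegrand, ← hCcard]
        ring

end Chaining

section DyadicSum

variable {g : ℝ → ℝ}

lemma sub_mul_le_integral_of_antitoneOn {a b : ℝ} (hab : a ≤ b)
    (hg : AntitoneOn g (Set.Icc a b)) : (b - a) * g b ≤ ∫ ρ in a..b, g ρ := by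
  have hint : IntervalIntegrable g volume a b := by
    rw [← Set.uIcc_of_le hab] at hg; exact hg.intervalIntegrable
  calc (b - a) * g b = ∫ _ in a..b, g b := by simp
    _ ≤ ∫ ρ in a..b, g ρ :=
        intervalIntegral.integral_mono_on hab intervalIntegrable_const hint
          fun ρ hρ => hg hρ (Set.right_mem_Icc.2 hab) hρ.2

lemma sum_dyadic_le_integral (hg : AntitoneOn g (Set.Ioi 0)) (K : ℕ) :
    ∑ j ∈ range K, 2⁻¹ ^ (j + 1) * g (2⁻¹ ^ (j + 1)) ≤
      2 * ∫ ρ in 2⁻¹ ^ (K + 1)..2⁻¹, g ρ := by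
  have hint (a b : ℝ) (ha : 0 < a) (hb : 0 < b) : IntervalIntegrable g volume a b :=
    (hg.mono fun _ hx => (lt_min ha hb).trans_le hx.1).intervalIntegrable
  induction K with
  | zero => simp
  | succ K ih =>
    have hstep : 2⁻¹ ^ (K + 1) * g (2⁻¹ ^ (K + 1)) ≤
        2 * ∫ ρ in 2⁻¹ ^ (K + 1 + 1)..2⁻¹ ^ (K + 1), g ρ := by
      have h := sub_mul_le_integral_of_antitoneOn (g := g)
        (pow_le_pow_of_le_one (by norm_num) (by norm_num) (K + 1).le_succ :
          (2⁻¹ : ℝ) ^ (K + 1 + 1) ≤ 2⁻¹ ^ (K + 1))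
        (hg.mono fun x hx => lt_of_lt_of_le (by positivity) hx.1)
      rw [pow_succ _ (K + 1)] at h ⊢
      linarith
    have hadd := intervalIntegral.integral_add_adjacent_intervals
      (hint (2⁻¹ ^ (K + 1 + 1)) (2⁻¹ ^ (K + 1)) (by positivity) (by positivity))
      (hint (2⁻¹ ^ (K + 1)) 2⁻¹ (by positivity) (by positivity))
    rw [sum_range_succ]
    linarith

end DyadicSum

section Cube

variable {ι : Type*} [Fintype ι] {V : Set (EuclideanSpace ℝ ι)} {a : ℝ}

lemma dist_le_sqrt_card_mul {u v : EuclideanSpace ℝ ι} {δ : ℝ} (hδ : 0 ≤ δ)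
    (h : ∀ i, |u i - v i| ≤ δ) : dist u v ≤ √(Fintype.card ι) * δ := by
  rw [EuclideanSpace.dist_eq, ← sqrt_sq hδ, ← sqrt_mul (Nat.cast_nonneg _)]
  refine sqrt_le_sqrt ?_
  calc ∑ i, dist (u i) (v i) ^ 2 ≤ ∑ _i : ι, δ ^ 2 :=
        sum_le_sum fun i _ => pow_le_pow_left₀ dist_nonneg (h i) 2
    _ = Fintype.card ι * δ ^ 2 := by simp

lemma ediam_le_of_subset_cube (ha : 0 ≤ a) (hV : ∀ v ∈ V, ∀ i, v i ∈ Set.Icc 0 a) :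
    ediam V ≤ ENNReal.ofReal (√(Fintype.card ι) * a) :=
  ediam_le_of_forall_dist_le fun u hu v hv => dist_le_sqrt_card_mul ha fun i => by
    obtain ⟨hu₀, hua⟩ := hV u hu i
    obtain ⟨hv₀, hva⟩ := hV v hv i
    exact abs_sub_le_iff.2 ⟨by linarith, by linarith⟩

lemma abs_sub_lt_of_floor_div_eq {x y δ : ℝ} (hx : 0 ≤ x) (hy : 0 ≤ y) (hδ : 0 < δ)
    (h : ⌊x / δ⌋₊ = ⌊y / δ⌋₊) : |x - y| < δ := by
  have hx₁ := Nat.floor_le (div_nonneg hx hδ.le)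
  have hx₂ := Nat.lt_floor_add_one (x / δ)
  have hy₁ := Nat.floor_le (div_nonneg hy hδ.le)
  have hy₂ := Nat.lt_floor_add_one (y / δ)
  rw [h] at hx₁ hx₂
  rw [abs_sub_lt_iff, ← div_lt_one hδ, ← div_lt_one hδ, sub_div, sub_div]
  constructor <;> linarith

lemma coveringNumber_le_of_subset_cube {δ : ℝ} (hδ : 0 < δ)
    (hV : ∀ v ∈ V, ∀ i, v i ∈ Set.Icc 0 a) :
    coveringNumber (√(Fintype.card ι) * δ).toNNReal V ≤
      ((⌊a / δ⌋₊ + 1) ^ Fintype.card ι : ℕ) := by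
  classical
  set q : EuclideanSpace ℝ ι → ι → ℕ := fun v i => ⌊v i / δ⌋₊
  obtain ⟨C, hCV, hbij⟩ := Set.exists_subset_bijOn V q
  have hcov : IsCover (√(Fintype.card ι) * δ).toNNReal V C :=
    (isCover_toNNReal_iff (by positivity)).2 fun v hv => by
      obtain ⟨c, hc, hqc⟩ : q v ∈ q '' C := hbij.image_eq ▸ Set.mem_image_of_mem q hv
      refine ⟨c, hc, dist_le_sqrt_card_mul hδ.le fun i => (abs_sub_lt_of_floor_div_eq
        (hV v hv i).1 (hV c (hCV hc) i).1 hδ (congrFun hqc i).symm).le⟩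
  have hcells : q '' V ⊆ ↑(Fintype.piFinset fun _ : ι => range (⌊a / δ⌋₊ + 1)) := by
    rintro _ ⟨v, hv, rfl⟩
    rw [mem_coe, Fintype.mem_piFinset]
    exact fun i => mem_range.2 <| Nat.lt_succ_of_le (Nat.floor_le_floor
      (div_le_div_of_nonneg_right (hV v hv i).2 hδ.le))
  calc coveringNumber _ V ≤ C.encard := hcov.coveringNumber_le_encard hCV
    _ = (q '' V).encard := by rw [← hbij.image_eq, hbij.injOn.encard_image]
    _ ≤ _ := (Set.encard_le_encard hcells).trans_eq <| by
        rw [Set.encard_coe_eq_coe_finsetCard]; simp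

lemma dudleyIntegrand_le_of_subset_cube (ha : 0 ≤ a)
    (hV : ∀ v ∈ V, ∀ i, v i ∈ Set.Icc 0 a) {ρ : ℝ} (hρ₀ : 0 < ρ) (hρ₁ : ρ ≤ 1) :
    dudleyIntegrand V ρ ≤
      1 + Fintype.card ι * (log (a * (√(Fintype.card ι) + 1) + 1) - log ρ) := by
  set d : ℝ := (Fintype.card ι : ℝ)
  set N := (coveringNumber ρ.toNNReal V).toNat
  have hN : N ≤ (⌊a * (√d + 1) / ρ⌋₊ + 1) ^ Fintype.card ι := by
    have hcube := coveringNumber_le_of_subset_cube (δ := ρ / (√d + 1)) (by positivity) hV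
    rw [div_div_eq_mul_div] at hcube
    have hscale : √d * (ρ / (√d + 1)) ≤ ρ := by
      rw [mul_div_assoc']
      exact div_le_of_le_mul₀ (by positivity) hρ₀.le (by nlinarith [sqrt_nonneg d])
    exact ENat.toNat_le_of_le_natCast
      ((coveringNumber_anti (Real.toNNReal_le_toNNReal hscale)).trans hcube)
  have hfloor : (⌊a * (√d + 1) / ρ⌋₊ : ℝ) + 1 ≤ (a * (√d + 1) + 1) / ρ := by
    have := Nat.floor_le (by positivity : 0 ≤ a * (√d + 1) / ρ)
    have : 1 ≤ 1 / ρ := one_le_one_div hρ₀ hρ₁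
    rw [add_div]; linarith
  have hlog : log N ≤ d * (log (a * (√d + 1) + 1) - log ρ) :=
    calc log N ≤ log (((⌊a * (√d + 1) / ρ⌋₊ + 1) ^ Fintype.card ι : ℕ) : ℝ) :=
          log_natCast_mono hN
      _ ≤ d * log ((a * (√d + 1) + 1) / ρ) := by
          push_cast; rw [log_pow]
          exact mul_le_mul_of_nonneg_left (log_le_log (by positivity) hfloor) (by positivity)
      _ = d * (log (a * (√d + 1) + 1) - log ρ) := by rw [log_div (by positivity) hρ₀.ne']
  have hsqrt : √(log N) ≤ 1 + log N :=
    sqrt_le_iff.2 ⟨by positivity, by nlinarith [log_natCast_nonneg N]⟩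
  exact hsqrt.trans (by linarith)

lemma intervalIntegrable_dudleyIntegrand_of_subset_cube (ha : 0 ≤ a)
    (hV : ∀ v ∈ V, ∀ i, v i ∈ Set.Icc 0 a) :
    IntervalIntegrable (dudleyIntegrand V) volume 0 1 := by
  have hdiam : ediam V ≠ ⊤ :=
    ne_top_of_le_ne_top ENNReal.ofReal_ne_top (ediam_le_of_subset_cube ha hV)
  have hanti := antitoneOn_dudleyIntegrand (totallyBounded_of_ediam_ne_top hdiam)
  set d : ℝ := (Fintype.card ι : ℝ)
  set c : ℝ := a * (√d + 1) + 1
  have hdom : IntervalIntegrable (fun ρ => 1 + d * (log c - log ρ)) volume 0 1 :=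
    intervalIntegrable_const.add
      ((intervalIntegrable_const.sub intervalIntegral.intervalIntegrable_log').const_mul d)
  refine hdom.mono_fun' ?_ ?_
  · rw [Set.uIoc_of_le zero_le_one]
    exact (aemeasurable_restrict_of_antitoneOn measurableSet_Ioc
      (hanti.mono fun ρ hρ => hρ.1)).aestronglyMeasurable
  · rw [Filter.EventuallyLE, ae_restrict_iff' measurableSet_uIoc]
    refine Filter.Eventually.of_forall fun ρ hρ => ?_
    rw [Set.uIoc_of_le zero_le_one] at hρ
    rw [Real.norm_of_nonneg (dudleyIntegrand_nonneg V ρ)]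
    exact dudleyIntegrand_le_of_subset_cube ha hV hρ.1 hρ.2

end Cube

section Dudley

variable {ι : Type*} [Fintype ι] [DecidableEq ι] {V : Set (EuclideanSpace ℝ ι)}

lemma rademacherWidth_le_of_le_dyadic (hne : V.Nonempty) (hV : ediam V ≤ 1)
    (hint : IntervalIntegrable (dudleyIntegrand V) volume 0 1) {α : ℝ} (hα : 0 ≤ α) {K : ℕ}
    (hαK : α ≤ 2⁻¹ ^ (K + 1)) :
    rademacherWidth V ≤
      √(Fintype.card ι) * 2⁻¹ ^ K + 12 * ∫ ρ in α..1, dudleyIntegrand V ρ := by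
  have hanti := antitoneOn_dudleyIntegrand
    (totallyBounded_of_ediam_ne_top (ne_top_of_le_ne_top ENNReal.one_ne_top hV))
  have hK : (2⁻¹ : ℝ) ^ (K + 1) ≤ 2⁻¹ :=
    pow_le_of_le_one (by norm_num) (by norm_num) K.succ_ne_zero
  have hα1 : α ≤ 1 := by linarith [(by norm_num : (2⁻¹ : ℝ) ≤ 1)]
  have hmono := intervalIntegral.integral_mono_interval (f := dudleyIntegrand V) hαK hK
    (by norm_num : (2⁻¹ : ℝ) ≤ 1) (Filter.Eventually.of_forall (dudleyIntegrand_nonneg V))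
    (hint.mono_set (Set.uIcc_subset_uIcc (by simp [hα, hα1]) (by simp)))
  linarith [rademacherWidth_le_chaining hne hV K, sum_dyadic_le_integral hanti K]

theorem rademacherWidth_le_dudley (hV : ediam V ≤ 1)
    (hint : IntervalIntegrable (dudleyIntegrand V) volume 0 1) {α : ℝ} (hα : 0 ≤ α) :
    rademacherWidth V ≤
      √(Fintype.card ι) * (4 * α) + 12 * ∫ ρ in α..1, dudleyIntegrand V ρ := by
  have hI := integral_dudleyIntegrand_nonneg hV α
  rcases V.eq_empty_or_nonempty with rfl | hne
  · simp only [rademacherWidth, Set.image_empty, Real.sSup_empty, expect_const_zero]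
    positivity
  rcases hα.eq_or_lt with rfl | hα₀
  · have hlim := ((tendsto_pow_atTop_nhds_zero_of_lt_one (by norm_num : (0 : ℝ) ≤ 2⁻¹)
      (by norm_num)).const_mul √(Fintype.card ι)).add_const
        (12 * ∫ ρ in (0 : ℝ)..1, dudleyIntegrand V ρ)
    simpa using ge_of_tendsto' hlim fun K =>
      rademacherWidth_le_of_le_dyadic hne hV hint le_rfl (by positivity)
  rcases le_or_gt α 2⁻¹ with hα₁ | hα₁
  · obtain ⟨K, hK₁, hK₂⟩ := exists_nat_pow_near_of_lt_one (x := 2 * α) (by positivity)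
      (by linarith) (by norm_num : (0 : ℝ) < 2⁻¹) (by norm_num)
    rw [pow_succ] at hK₁
    refine (rademacherWidth_le_of_le_dyadic hne hV hint hα (K := K)
      (by rw [pow_succ]; linarith)).trans ?_
    gcongr
    linarith
  · calc rademacherWidth V ≤ √(Fintype.card ι) := by
          simpa using rademacherWidth_le_chaining hne hV 0
      _ ≤ _ := by nlinarith [sqrt_nonneg (Fintype.card ι : ℝ)]

end Dudley

section Sample

variable {n : ℕ}

lemma sInf_card_indexed_cover_eq {α : Type*} {X : Type*} [PseudoMetricSpace X] (φ : α → X)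
    (F : Set α) {ρ : ℝ} (hρ : 0 ≤ ρ) :
    sInf {N : ℕ | ∃ c : Fin N → α, (∀ i, c i ∈ F) ∧
        ∀ f ∈ F, ∃ i, dist (φ f) (φ (c i)) ≤ ρ} =
      (coveringNumber ρ.toNNReal (φ '' F)).toNat := by
  set T := {N : ℕ | ∃ c : Fin N → α, (∀ i, c i ∈ F) ∧
    ∀ f ∈ F, ∃ i, dist (φ f) (φ (c i)) ≤ ρ}
  have hle (N : ℕ) (hN : N ∈ T) : coveringNumber ρ.toNNReal (φ '' F) ≤ N := by
    obtain ⟨c, hcF, hc⟩ := hN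
    have hcov : IsCover ρ.toNNReal (φ '' F) (Set.range (φ ∘ c)) :=
      (isCover_toNNReal_iff hρ).2 <| by
        rintro _ ⟨f, hf, rfl⟩
        obtain ⟨i, hi⟩ := hc f hf
        exact ⟨_, ⟨i, rfl⟩, hi⟩
    calc coveringNumber ρ.toNNReal (φ '' F)
        ≤ (Set.range (φ ∘ c)).encard :=
          hcov.coveringNumber_le_encard (Set.range_subset_iff.2 fun i => ⟨c i, hcF i, rfl⟩)
      _ ≤ (Set.univ : Set (Fin N)).encard := by
          rw [← Set.image_univ]; exact Set.encard_image_le _ _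
      _ = N := by simp [Set.encard_univ]
  by_cases htop : coveringNumber ρ.toNNReal (φ '' F) = ⊤
  · rw [htop, ENat.toNat_top, Nat.sInf_eq_zero]
    exact Or.inr <| Set.eq_empty_of_forall_notMem fun N hN => by
      simpa [htop] using hle N hN
  obtain ⟨C, hCF, hCcard, hC⟩ := exists_finset_cover hρ htop
  choose g hgF hgφ using fun x (hx : x ∈ (C : Set X)) => hCF hx
  have hmem : (coveringNumber ρ.toNNReal (φ '' F)).toNat ∈ T := by
    rw [← hCcard]
    refine ⟨fun i => g _ (C.equivFin.symm i).2, fun i => hgF _ _, fun f hf => ?_⟩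
    obtain ⟨x, hx, hfx⟩ := hC (φ f) ⟨f, hf, rfl⟩
    exact ⟨C.equivFin ⟨x, hx⟩, by simpa [hgφ] using hfx⟩
  refine le_antisymm (Nat.sInf_le hmem) ?_
  exact ENat.toNat_le_of_le_natCast (hle _ (Nat.sInf_mem ⟨_, hmem⟩))

/-- The factor `1/√n` makes `d_S` the Euclidean distance. -/
noncomputable def sampleVec (S : Fin n → Z) (f : Z → ℝ) : EuclideanSpace ℝ (Fin n) :=
  WithLp.toLp 2 fun i => (√n)⁻¹ * f (S i)

lemma sampleVec_mem_Icc (S : Fin n → Z) {f : Z → ℝ} (hf : ∀ z, f z ∈ Set.Icc (0 : ℝ) 1)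
    (i : Fin n) : sampleVec S f i ∈ Set.Icc 0 (√n)⁻¹ :=
  ⟨mul_nonneg (by positivity) (hf (S i)).1, mul_le_of_le_one_right (by positivity) (hf (S i)).2⟩

lemma empDistZ_eq_dist (S : Fin n → Z) (f g : Z → ℝ) :
    empDistZ S f g = dist (sampleVec S f) (sampleVec S g) := by
  rw [empDistZ, EuclideanSpace.dist_eq, mul_sum]
  congr 1
  refine sum_congr rfl fun i _ => ?_
  simp only [sampleVec, Real.dist_eq, sq_abs, ← mul_sub, mul_pow, inv_pow,
    sq_sqrt (Nat.cast_nonneg n)]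

lemma coveringNumberZ_eq (F : Set (Z → ℝ)) (S : Fin n → Z) {ρ : ℝ} (hρ : 0 ≤ ρ) :
    coveringNumberZ F ρ S = (coveringNumber ρ.toNNReal (sampleVec S '' F)).toNat := by
  simp only [coveringNumberZ, empDistZ_eq_dist]
  exact sInf_card_indexed_cover_eq (sampleVec S) F hρ

lemma empRadZ_eq (F : Set (Z → ℝ)) (S : Fin n → Z) :
    empRadZ F S = (√n)⁻¹ * rademacherWidth (sampleVec S '' F) := by
  have hσ (σ : Fin n → Bool) :
      sSup ((fun f => (n : ℝ)⁻¹ * ∑ i, (if σ i then (1 : ℝ) else -1) * f (S i)) '' F) =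
        (√n)⁻¹ * sSup ((fun v => ⟪signVec σ, v⟫_ℝ) '' (sampleVec S '' F)) := by
    rw [← smul_eq_mul, ← Real.sSup_smul_of_nonneg (by positivity), ← Set.image_smul,
      Set.image_image, Set.image_image]
    refine congrArg sSup (Set.image_congr fun f _ => ?_)
    simp only [inner_signVec, sampleVec, smul_eq_mul, mul_sum]
    have hn : (n : ℝ)⁻¹ = (√n)⁻¹ * (√n)⁻¹ := by
      rw [← mul_inv, mul_self_sqrt (Nat.cast_nonneg n)]
    rw [hn]
    exact sum_congr rfl fun i _ => by ring
  simp only [empRadZ, rademacherWidth, Fintype.expect_eq_sum_div_card, hσ, ← mul_sum,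
    Fintype.card_fun, Fintype.card_bool, Fintype.card_fin]
  push_cast
  ring

end Sample

/-- **Lemma 3 (Dudley entropy-integral bound on the empirical Rademacher average).**
For any class `F` of `[0,1]`-valued functions on `Z` and any sample `S ∈ Zⁿ`,
`R̂_n(F,S) ≤ inf_{α ≥ 0} { 4α + (12/√n) ∫_α^1 √(log N₂(F,ρ,S)) dρ }`. -/
theorem dudley_entropy_integral_bound :
    ∀ (Z : Type u) (n : ℕ), 1 ≤ n →
      ∀ F : Set (Z → ℝ), (∀ f ∈ F, ∀ z, f z ∈ Set.Icc (0 : ℝ) 1) →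
      ∀ S : Fin n → Z, ∀ α : ℝ, 0 ≤ α →
        empRadZ F S ≤ 4 * α +
          12 / Real.sqrt n *
            ∫ ρ in α..(1 : ℝ), Real.sqrt (Real.log ((coveringNumberZ F ρ S : ℝ))) := by
  intro Z n hn F hF S α hα
  have hn' : 0 < √(n : ℝ) := sqrt_pos.2 (by exact_mod_cast hn)
  have hcube : ∀ v ∈ sampleVec S '' F, ∀ i, v i ∈ Set.Icc 0 (√n)⁻¹ := by
    rintro _ ⟨f, hf, rfl⟩
    exact sampleVec_mem_Icc S (hF f hf)
  have hV : ediam (sampleVec S '' F) ≤ 1 := by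
    simpa [mul_inv_cancel₀ hn'.ne'] using ediam_le_of_subset_cube (by positivity) hcube
  have hint := intervalIntegrable_dudleyIntegrand_of_subset_cube (inv_nonneg.2 hn'.le) hcube
  have hentropy : ∫ ρ in α..1, √(log (coveringNumberZ F ρ S)) =
      ∫ ρ in α..1, dudleyIntegrand (sampleVec S '' F) ρ :=
    intervalIntegral.integral_congr fun ρ hρ => by
      rw [coveringNumberZ_eq F S ((le_min hα zero_le_one).trans hρ.1), dudleyIntegrand]
  rw [empRadZ_eq, hentropy]
  calc (√n)⁻¹ * rademacherWidth (sampleVec S '' F)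
      ≤ (√n)⁻¹ *
          (√n * (4 * α) + 12 * ∫ ρ in α..1, dudleyIntegrand (sampleVec S '' F) ρ) := by
        gcongr
        simpa using rademacherWidth_le_dudley hV hint hα
    _ = _ := by field_simp

end RST
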